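/- arXiv:1209.3536 — 2 statements merged into one kernel-verified Lean document; each statement's English description precedes it below -/
import Mathlib

section
/- Let A → B be a ring homomorphism with B finitely generated projective as an A-module and Hom_A(B, A) projective as a B-module. If L is a flat A-module, then Hom_A(B, L) is a flat B-module. -/
/-- Flatness of a left module over a possibly noncommutative ring, via Lambek's criterion:
`M` is flat over `R` iff its character module `Hom_ℤ(M, ℚ/ℤ)` is injective as a right
`R`-module (this is equivalent to exactness of `(-) ⊗_R M`). -/
def IsFlat (R M : Type) [Ring R] [AddCommGroup M] [Module R M] : Prop :=
  Module.Injective Rᵈᵐᵃ (M →+ AddCircle (1 : ℚ))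

/-- `flatDimLE R d M` : the flat dimension of `M` over `R` is at most `d`
(there is a flat resolution of length `≤ d`). -/
def flatDimLE (R : Type) [Ring R] : ℕ → ModuleCat.{0} R → Prop
  | 0, M => IsFlat R M
  | d+1, M => ∃ (F : ModuleCat.{0} R) (g : F →ₗ[R] M),
      IsFlat R F ∧ Function.Surjective g ∧
        flatDimLE R d (ModuleCat.of R (LinearMap.ker g))

/-- Flat dimension at most `d`, for a bare module. -/
def FlatDimLE (R M : Type) [Ring R] [AddCommGroup M] [Module R M] (d : ℕ) : Prop :=
  flatDimLE R d (ModuleCat.of R M)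

/-- `projDimLE R d M` : the projective dimension of `M` over `R` is at most `d`. -/
def projDimLE (R : Type) [Ring R] : ℕ → ModuleCat.{0} R → Prop
  | 0, M => Module.Projective R M
  | d+1, M => ∃ (F : ModuleCat.{0} R) (g : F →ₗ[R] M),
      Module.Projective R F ∧ Function.Surjective g ∧
        projDimLE R d (ModuleCat.of R (LinearMap.ker g))

/-- `R` has finite (left) global dimension: there is a uniform bound on the projective
dimension of all `R`-modules. -/
def HasFiniteGlobalDim (R : Type) [Ring R] : Prop :=
  ∃ g : ℕ, ∀ M : ModuleCat.{0} R, projDimLE R g M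

/-!
By Lambek's criterion we must show that the character module `Hom_A(B, L)⁺` is an injective
right `B`-module. A dual basis `(xᵢ, φᵢ)` of `B` over `A` identifies `Hom_A(B, L)` with
`B* ⊗_A L`, where `B* = Hom_A(B, A)`; concretely, `Hom_A(B, L)⁺` is a retract of
`Hom_{Aᵒᵖ}(B*, L⁺)` via `c ↦ (ψ ↦ l ↦ c (ψ(-) • l))` and `θ ↦ (m ↦ ∑ᵢ θ φᵢ (m xᵢ))`.
That module is injective because `B*` is a projective `B`-module and `L⁺` an injective
`Aᵒᵖ`-module: embedding `L⁺` into a coinduced module `Hom_ℤ(A, E)` with `E` divisible makes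
`Hom_{Aᵒᵖ}(B*, L⁺)` a retract of `Hom_ℤ(B*, E)`, and `Hom_ℤ(P, E)` is injective for every
projective `P`, one coordinate of a free module at a time.
-/

open Function

universe u

@[simp]
theorem DomMulAct.mk_zero {M : Type*} [NonAssocSemiring M] : DomMulAct.mk (0 : M) = 0 := rfl

-- Without this, the `RingHom.id` of `Rᵈᵐᵃ` built from `NonAssocSemiring Rᵐᵒᵖ` is not unified
-- with the one coming from `Semiring Rᵈᵐᵃ`, and `Rᵈᵐᵃ`-linear maps cannot be applied.
instance DomMulAct.instNonAssocSemiringOfSemiring {R : Type*} [Semiring R] :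
    NonAssocSemiring Rᵈᵐᵃ :=
  Semiring.toNonAssocSemiring

def DomMulAct.mkSMulAddHom {B Y : Type*} [Ring B] [AddCommGroup Y] [Module Bᵈᵐᵃ Y] (y : Y) :
    B →+ Y :=
  AddMonoidHom.mk' (fun c => DomMulAct.mk c • y) fun _ _ => add_smul _ _ y

theorem Module.Injective.of_retract {R : Type*} {M N : Type u} [Ring R] [AddCommGroup M]
    [AddCommGroup N] [Module R M] [Module R N] [Module.Injective R M]
    (i : N →ₗ[R] M) (r : M →ₗ[R] N) (h : r ∘ₗ i = LinearMap.id) : Module.Injective R N where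
  out _ _ _ _ _ _ f hf g := by
    obtain ⟨k, hk⟩ := Module.Injective.out f hf (i ∘ₗ g)
    refine ⟨r ∘ₗ k, fun x => ?_⟩
    rw [LinearMap.comp_apply, hk, LinearMap.comp_apply]
    exact LinearMap.congr_fun h (g x)

section HomInjective

variable {B : Type*} {P E : Type u} [Ring B] [AddCommGroup P] [Module B P] [AddCommGroup E]

theorem injective_addMonoidHom_of_projective [Module.Projective B P] (hE : Module.Baer ℤ E) :
    Module.Injective Bᵈᵐᵃ (P →+ E) where
  out X Y _ _ _ _ f hf g := by
    obtain ⟨s, hs⟩ := Module.Projective.out (R := B) (P := P)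
    choose h hh using fun q : P => hE.extension_property_addMonoidHom f.toAddMonoidHom hf
      ((AddMonoidHom.eval q).comp g.toAddMonoidHom)
    -- Reassemble the extensions `h q` of the coordinates `x ↦ g x q` along the splitting `s`.
    let H (y : Y) : P →+ E :=
      (Finsupp.liftAddHom fun q => (h q).comp (DomMulAct.mkSMulAddHom y)).comp s.toAddMonoidHom
    have H_apply (y : Y) (p : P) : H y p = (s p).sum fun q c => h q (DomMulAct.mk c • y) :=
      Finsupp.liftAddHom_apply _ _
    refine ⟨{ toFun := H, map_add' := ?_, map_smul' := ?_ }, fun x => ?_⟩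
    · intro y y'
      ext p
      simp [H_apply, smul_add, Finsupp.sum_add]
    · intro u y
      obtain ⟨b, rfl⟩ := DomMulAct.mk.surjective u
      ext p
      rw [RingHom.id_apply, DomMulAct.mk_smul_addMonoidHom_apply, H_apply, H_apply, map_smul,
        Finsupp.sum_smul_index' fun q => by simp]
      simp only [smul_smul, smul_eq_mul, DomMulAct.mk_mul]
    · ext p
      have hg (c : B) (q : P) : h q (DomMulAct.mk c • f x) = g x (c • q) := by
        rw [← map_smul, ← DomMulAct.mk_smul_addMonoidHom_apply, ← map_smul]
        exact DFunLike.congr_fun (hh q) _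
      calc H (f x) p = (s p).sum fun q c => g x (c • q) := by simp only [H_apply, hg]
        _ = g x (Finsupp.linearCombination B id (s p)) := by
          rw [Finsupp.linearCombination_apply, map_finsuppSum]; rfl
        _ = g x p := by rw [hs p]

variable {A' D : Type u} [Ring A'] [Module A' P] [SMulCommClass A' B P]
  [AddCommGroup D] [Module A' D]

theorem injective_linearMap_of_injective_addMonoidHom [Module A' (A' →+ E)]
    (hsmul : ∀ (a x : A') (χ : A' →+ E), (a • χ) x = χ (x * a)) [Module.Injective A' D]
    (ι : D →+ E) (hι : Injective ι) [Module.Injective Bᵈᵐᵃ (P →+ E)] :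
    Module.Injective Bᵈᵐᵃ (P →ₗ[A'] D) := by
  let j : D →ₗ[A'] (A' →+ E) :=
    { toFun d := ι.comp ((smulAddHom A' D).flip d)
      map_add' d d' := by ext; simp
      map_smul' a d := by ext; simp [hsmul, mul_smul] }
  have hj : Injective j := fun d d' hdd' => hι (by simpa [j] using DFunLike.congr_fun hdd' 1)
  obtain ⟨ρ, hρ⟩ := Module.Injective.out j hj LinearMap.id
  let i : (P →ₗ[A'] D) →ₗ[Bᵈᵐᵃ] (P →+ E) :=
    { toFun φ := ι.comp φ.toAddMonoidHom
      map_add' φ φ' := by ext; simp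
      map_smul' u φ := by
        obtain ⟨b, rfl⟩ := DomMulAct.mk.surjective u
        ext; rfl }
  let r₀ (ψ : P →+ E) : P →ₗ[A'] D :=
    { toFun p := ρ (ψ.comp ((smulAddHom A' P).flip p))
      map_add' p p' := by rw [← map_add]; congr 1; ext; simp
      map_smul' a p := by
        rw [RingHom.id_apply, ← map_smul]; congr 1; ext; simp [hsmul, mul_smul] }
  let r : (P →+ E) →ₗ[Bᵈᵐᵃ] (P →ₗ[A'] D) :=
    { toFun := r₀
      map_add' ψ ψ' := LinearMap.ext fun p => by simp [r₀, AddMonoidHom.add_comp]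
      map_smul' u ψ := LinearMap.ext fun p => by
        obtain ⟨b, rfl⟩ := DomMulAct.mk.surjective u
        show ρ _ = ρ _
        congr 1; ext x
        exact congrArg ψ (smul_comm x b p).symm }
  refine .of_retract i r (LinearMap.ext fun φ => LinearMap.ext fun p => ?_)
  refine (congrArg ρ ?_).trans (hρ (φ p))
  ext x
  exact congrArg ι (φ.map_smul x p)

theorem injective_linearMap_of_projective [Module.Projective B P] [Module.Injective A' D] :
    Module.Injective Bᵈᵐᵃ (P →ₗ[A'] D) := by
  -- the coinduced module `Hom_ℤ(A', E)`, with `(a • χ) x = χ (x * a)`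
  let : Module A' (A' →+ (CharacterModule D → AddCircle (1 : ℚ))) :=
    Module.compHom _ (show A' →+* A'ᵐᵒᵖᵈᵐᵃ from (RingEquiv.opOp A').toRingHom)
  have := injective_addMonoidHom_of_projective (B := B) (P := P)
    (Module.Baer.of_divisible (CharacterModule D → AddCircle (1 : ℚ)))
  let ι : D →+ (CharacterModule D → AddCircle (1 : ℚ)) :=
    AddMonoidHom.mk' (fun d c => c d) fun _ _ => by ext; simp
  have hι : Injective ι := (injective_iff_map_eq_zero ι).2 fun d hd =>
    CharacterModule.eq_zero_of_character_apply fun c => congr_fun hd c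
  exact injective_linearMap_of_injective_addMonoidHom (fun _ _ _ => rfl) ι hι

end HomInjective

theorem Module.Finite.exists_dual_basis_of_projective (R M : Type*) [Ring R] [AddCommGroup M]
    [Module R M] [Module.Finite R M] [Module.Projective R M] :
    ∃ (n : ℕ) (x : Fin n → M) (φ : Fin n → M →ₗ[R] R), ∀ y, ∑ i, φ i y • x i = y := by
  classical
  obtain ⟨n, f, g, -, -, hfg⟩ := Module.Finite.exists_comp_eq_id_of_projective R M
  refine ⟨n, fun i => f (Pi.single i 1), fun i => LinearMap.proj i ∘ₗ g, fun y => ?_⟩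
  conv_rhs => rw [← LinearMap.id_apply (R := R) y, ← hfg, LinearMap.comp_apply,
    LinearMap.pi_apply_eq_sum_univ f]
  congr! 3 with i -
  ext j
  simp [Pi.single_apply, eq_comm]

def LinearMap.smulRightAddHom {R M N : Type*} [Ring R] [AddCommGroup M] [Module R M]
    [AddCommGroup N] [Module R N] : (M →ₗ[R] R) →+ N →+ (M →ₗ[R] N) :=
  AddMonoidHom.mk' (fun ψ => AddMonoidHom.mk' ψ.smulRight fun l l' => by ext; simp)
    fun ψ ψ' => by ext; simp [add_smul]

@[simp]
theorem LinearMap.smulRightAddHom_apply {R M N : Type*} [Ring R] [AddCommGroup M] [Module R M]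
    [AddCommGroup N] [Module R N] (ψ : M →ₗ[R] R) (l : N) (y : M) :
    LinearMap.smulRightAddHom ψ l y = ψ y • l := rfl

theorem LinearMap.sum_smulRightAddHom_of_dual_basis {R M N : Type*} [Ring R] [AddCommGroup M]
    [Module R M] [AddCommGroup N] [Module R N] {n : ℕ} {x : Fin n → M} {φ : Fin n → M →ₗ[R] R}
    (hxφ : ∀ y, ∑ i, φ i y • x i = y) (m : M →ₗ[R] N) :
    ∑ i, LinearMap.smulRightAddHom (φ i) (m (x i)) = m := by
  ext y
  simp_rw [LinearMap.sum_apply, LinearMap.smulRightAddHom_apply, ← map_smul, ← map_sum, hxφ]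

section DualBasis

variable {A B L Q : Type u} [Ring A] [Ring B] [Module A B] [IsScalarTower A B B]
  [AddCommGroup L] [Module A L] [AddCommGroup Q]
  [Module B (B →ₗ[A] A)] [Module Aᵈᵐᵃ (B →ₗ[A] A)]

theorem smul_eq_sum_of_dual_basis {n : ℕ} {x : Fin n → B} {φ : Fin n → B →ₗ[A] A}
    (hxφ : ∀ y, ∑ i, φ i y • x i = y)
    (hdual : ∀ (b : B) (ψ : B →ₗ[A] A) (y : B), (b • ψ) y = ψ (y * b))
    (hright : ∀ (a : A) (ψ : B →ₗ[A] A) (y : B), (DomMulAct.mk a • ψ) y = ψ y * a)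
    (b : B) (ψ : B →ₗ[A] A) : b • ψ = ∑ j, DomMulAct.mk (ψ (x j * b)) • φ j := by
  ext y
  rw [hdual, LinearMap.sum_apply]
  conv_lhs => rw [← hxφ y, Finset.sum_mul, map_sum]
  simp [hright, smul_mul_assoc]

theorem sum_apply_smul_of_dual_basis {n : ℕ} {x : Fin n → B} {φ : Fin n → B →ₗ[A] A}
    (hxφ : ∀ y, ∑ i, φ i y • x i = y)
    (hdual : ∀ (b : B) (ψ : B →ₗ[A] A) (y : B), (b • ψ) y = ψ (y * b))
    (hright : ∀ (a : A) (ψ : B →ₗ[A] A) (y : B), (DomMulAct.mk a • ψ) y = ψ y * a)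
    (θ : (B →ₗ[A] A) →ₗ[Aᵈᵐᵃ] (L →+ Q)) (b : B) (m : B →ₗ[A] L) :
    ∑ i, θ (b • φ i) (m (x i)) = ∑ i, θ (φ i) (m (x i * b)) := by
  simp_rw [smul_eq_sum_of_dual_basis hxφ hdual hright, map_sum, map_smul,
    AddMonoidHom.finsetSum_apply, DomMulAct.mk_smul_addMonoidHom_apply]
  rw [Finset.sum_comm]
  simp_rw [← map_sum, ← map_smul, ← map_sum, hxφ]

theorem injective_addMonoidHom_of_injective_linearMap_dual
    [Module B (B →ₗ[A] L)] [SMulCommClass Aᵈᵐᵃ B (B →ₗ[A] A)]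
    [Module.Finite A B] [Module.Projective A B]
    (hdual : ∀ (b : B) (ψ : B →ₗ[A] A) (y : B), (b • ψ) y = ψ (y * b))
    (hright : ∀ (a : A) (ψ : B →ₗ[A] A) (y : B), (DomMulAct.mk a • ψ) y = ψ y * a)
    (hdualL : ∀ (b : B) (m : B →ₗ[A] L) (y : B), (b • m) y = m (y * b))
    [Module.Injective Bᵈᵐᵃ ((B →ₗ[A] A) →ₗ[Aᵈᵐᵃ] (L →+ Q))] :
    Module.Injective Bᵈᵐᵃ ((B →ₗ[A] L) →+ Q) := by
  obtain ⟨n, x, φ, hxφ⟩ := Module.Finite.exists_dual_basis_of_projective A B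
  let i₀ (c : (B →ₗ[A] L) →+ Q) : (B →ₗ[A] A) →ₗ[Aᵈᵐᵃ] (L →+ Q) :=
    { toFun ψ := c.comp (LinearMap.smulRightAddHom ψ)
      map_add' ψ ψ' := by rw [map_add, AddMonoidHom.comp_add]
      map_smul' u ψ := by
        obtain ⟨a, rfl⟩ := DomMulAct.mk.surjective u
        ext l
        show c _ = c _
        congr 1; ext; simp [hright, mul_smul] }
  let i : ((B →ₗ[A] L) →+ Q) →ₗ[Bᵈᵐᵃ] ((B →ₗ[A] A) →ₗ[Aᵈᵐᵃ] (L →+ Q)) :=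
    { toFun := i₀
      map_add' c c' := rfl
      map_smul' u c := by
        obtain ⟨b, rfl⟩ := DomMulAct.mk.surjective u
        ext ψ l
        show c _ = c _
        congr 1; ext; simp [hdual, hdualL] }
  let r : ((B →ₗ[A] A) →ₗ[Aᵈᵐᵃ] (L →+ Q)) →ₗ[Bᵈᵐᵃ] ((B →ₗ[A] L) →+ Q) :=
    { toFun θ := ∑ j, (θ (φ j)).comp (LinearMap.evalAddMonoidHom (x j))
      map_add' θ θ' := by ext; simp [Finset.sum_add_distrib]
      map_smul' u θ := by
        obtain ⟨b, rfl⟩ := DomMulAct.mk.surjective u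
        ext m
        simp [sum_apply_smul_of_dual_basis hxφ hdual hright, hdualL] }
  refine .of_retract i r (LinearMap.ext fun c => AddMonoidHom.ext fun m => ?_)
  show (∑ j, (i₀ c (φ j)).comp (LinearMap.evalAddMonoidHom (x j))) m = c m
  rw [AddMonoidHom.finsetSum_apply]
  show ∑ j, c (LinearMap.smulRightAddHom (φ j) (m (x j))) = c m
  rw [← map_sum, LinearMap.sum_smulRightAddHom_of_dual_basis hxφ]

end DualBasis

/-- Let `A → B` be a ring homomorphism with `B` finitely generated projective as an `A`-module
and `Hom_A(B, A)` projective as a `B`-module. If `L` is a flat `A`-module, then `Hom_A(B, L)`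
is a flat `B`-module, where the `B`-module structure is `(b • h) x = h (x * b)`. -/
theorem stmt3 (A B : Type) [Ring A] [Ring B] (f : A →+* B)
    [Module A B] (hAB : ∀ (a : A) (b : B), a • b = f a * b)
    (hfin : Module.Finite A B) (hproj : Module.Projective A B)
    [Module B (B →ₗ[A] A)]
    (hdual : ∀ (b : B) (h : B →ₗ[A] A) (x : B), (b • h) x = h (x * b))
    (hdualproj : Module.Projective B (B →ₗ[A] A))
    (L : Type) [AddCommGroup L] [Module A L] (hL : IsFlat A L)
    [Module B (B →ₗ[A] L)]
    (hdualL : ∀ (b : B) (h : B →ₗ[A] L) (x : B), (b • h) x = h (x * b)) :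
    IsFlat B (B →ₗ[A] L) := by
  have : IsScalarTower A B B := ⟨fun a x y => by simp only [smul_eq_mul, hAB, mul_assoc]⟩
  let : Module Aᵈᵐᵃ (B →ₗ[A] A) := Module.compHom _ (RingHom.id Aᵐᵒᵖ : Aᵈᵐᵃ →+* Aᵐᵒᵖ)
  have hright (a : A) (ψ : B →ₗ[A] A) (y : B) : (DomMulAct.mk a • ψ) y = ψ y * a := rfl
  have : SMulCommClass Aᵈᵐᵃ B (B →ₗ[A] A) := ⟨fun u b ψ => by
    obtain ⟨a, rfl⟩ := DomMulAct.mk.surjective u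
    ext y
    simp only [hright, hdual]⟩
  have : Module.Injective Aᵈᵐᵃ (L →+ AddCircle (1 : ℚ)) := hL
  have : Module.Injective Bᵈᵐᵃ ((B →ₗ[A] A) →ₗ[Aᵈᵐᵃ] (L →+ AddCircle (1 : ℚ))) :=
    injective_linearMap_of_projective
  exact injective_addMonoidHom_of_injective_linearMap_dual hdual hright hdualL
end

section
/- Let k be a field and let B be any k-algebra containing the polynomial algebra A = k[x_1,…,x_n] such that B is free of finite rank as an A-module. If M is a B-module that is flat over A, and B has finite global dimension, and Hom_A(B,A) is projective over B, then M is flat over B. -/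
noncomputable section

namespace Stmt17Aux

set_option linter.unusedSectionVars false

local notation "T" => AddCircle (1 : ℚ)

/-- a `NonAssocSemiring` structure on `Mᵈᵐᵃ` reducibly compatible with the `Semiring` one. -/
instance dmaNonAssoc {M : Type} [Semiring M] : NonAssocSemiring Mᵈᵐᵃ := Semiring.toNonAssocSemiring

section

/-- Extension of additive maps into the divisible group `ℚ/ℤ` along injections. -/
lemma ext_addHom {X Y : Type} [AddCommGroup X] [AddCommGroup Y] (f : X →+ Y)
    (hf : Function.Injective f) (g : X →+ T) : ∃ h : Y →+ T, ∀ x, h (f x) = g x := by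
  obtain ⟨h, hh⟩ := (Module.Baer.of_divisible T).extension_property_addMonoidHom f hf g
  exact ⟨h, fun x => DFunLike.congr_fun hh x⟩

variable {R : Type} [Ring R]

/-- The contravariant character-module functoriality. -/
def charMap {N N' : Type} [AddCommGroup N] [AddCommGroup N'] [Module R N] [Module R N']
    (φ : N →ₗ[R] N') : (N' →+ T) →ₗ[Rᵈᵐᵃ] (N →+ T) where
  toFun F := F.comp φ.toAddMonoidHom
  map_add' F G := by ext x; rfl
  map_smul' c F := by
    ext x
    simp only [AddMonoidHom.coe_comp, Function.comp_apply, RingHom.id_apply,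
      DomMulAct.smul_addMonoidHom_apply, LinearMap.toAddMonoidHom_coe, map_smul]

@[simp] lemma charMap_apply {N N' : Type} [AddCommGroup N] [AddCommGroup N'] [Module R N]
    [Module R N'] (φ : N →ₗ[R] N') (F : N' →+ T) (x : N) : charMap φ F x = F (φ x) := rfl

lemma injective_of_retract {V W : Type} [AddCommGroup V] [AddCommGroup W] [Module R V]
    [Module R W] (i : V →ₗ[R] W) (r : W →ₗ[R] V) (hri : ∀ v, r (i v) = v)
    (hW : Module.Injective R W) : Module.Injective R V where
  out X Y _ _ _ _ f hf g := by
    obtain ⟨H, hH⟩ := hW.out f hf (i ∘ₗ g)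
    exact ⟨r ∘ₗ H, fun x => by simp [hH x, hri]⟩

lemma injective_pi {ι : Type} (Q : ι → Type) [∀ i, AddCommGroup (Q i)] [∀ i, Module R (Q i)]
    (h : ∀ i, Module.Injective R (Q i)) : Module.Injective R (∀ i, Q i) where
  out X Y _ _ _ _ f hf g := by
    choose H hH using fun i => (h i).out f hf ((LinearMap.proj i) ∘ₗ g)
    exact ⟨LinearMap.pi H, fun x => by ext i; exact hH i x⟩

/-- transfer injectivity of character modules along a retract of `R`-modules. -/
lemma char_injective_of_retract {N N' : Type} [AddCommGroup N] [AddCommGroup N'] [Module R N]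
    [Module R N'] (i : N →ₗ[R] N') (r : N' →ₗ[R] N) (hri : ∀ v, r (i v) = v)
    (hN' : Module.Injective Rᵈᵐᵃ (N' →+ T)) : Module.Injective Rᵈᵐᵃ (N →+ T) := by
  refine injective_of_retract (charMap r) (charMap i) (fun F => ?_) hN'
  ext x; simp [hri]

/-- the character module of a finite product embeds as a retract in the product of the
character modules. -/
lemma char_pi_injective {ι : Type} [Fintype ι] [DecidableEq ι] (N : Type) [AddCommGroup N]
    [Module R N] (hN : Module.Injective Rᵈᵐᵃ (N →+ T)) :
    Module.Injective Rᵈᵐᵃ ((ι → N) →+ T) := by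
  refine injective_of_retract
    (LinearMap.pi (fun i => charMap (LinearMap.single R (fun _ : ι => N) i)))
    (∑ i : ι, charMap (LinearMap.proj (R := R) (φ := fun _ : ι => N) i) ∘ₗ
        (LinearMap.proj (R := Rᵈᵐᵃ) (φ := fun _ : ι => (N →+ T)) i))
    (fun F => ?_) (injective_pi _ (fun _ => hN))
  refine DFunLike.ext _ _ fun x => ?_
  simp only [LinearMap.sum_apply, LinearMap.coe_comp, Function.comp_apply, LinearMap.proj_apply,
    LinearMap.pi_apply, charMap_apply, AddMonoidHom.finset_sum_apply, LinearMap.single_apply]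
  rw [← map_sum]
  congr 1
  exact (Finset.univ_sum_single x)

end

section

variable {R : Type} [Ring R]

/-- Factor a linear map through a surjection whose kernel it kills. -/
lemma lift_of_surjective {P W V : Type} [AddCommGroup P] [AddCommGroup W] [AddCommGroup V]
    [Module R P] [Module R W] [Module R V] (ρ : P →ₗ[R] W) (hρ : Function.Surjective ρ)
    (θ : P →ₗ[R] V) (h : LinearMap.ker ρ ≤ LinearMap.ker θ) :
    ∃ θ' : W →ₗ[R] V, ∀ x, θ' (ρ x) = θ x := by
  have key : ∀ x y : P, ρ x = ρ y → θ x = θ y := by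
    intro x y hxy
    have : x - y ∈ LinearMap.ker ρ := by simp [LinearMap.mem_ker, map_sub, hxy]
    have := h this
    rw [LinearMap.mem_ker, map_sub, sub_eq_zero] at this
    exact this
  refine ⟨{ toFun := fun w => θ (Function.surjInv hρ w)
            map_add' := ?_, map_smul' := ?_ }, ?_⟩
  · intro w w'
    rw [← map_add]
    exact key _ _ (by simp [Function.surjInv_eq hρ, map_add])
  · intro r w
    rw [RingHom.id_apply, ← map_smul]
    exact key _ _ (by simp [Function.surjInv_eq hρ, map_smul])
  · intro x
    exact key _ _ (by simp [Function.surjInv_eq hρ])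

/-- `Ext¹(Z, Y) = 0`, phrased via arbitrary projective presentations of `Z`. -/
def Ext1Z (R : Type) [Ring R] (Y Z : Type) [AddCommGroup Y] [Module R Y] [AddCommGroup Z] [Module R Z] : Prop :=
  ∀ (P : Type) [AddCommGroup P] [Module R P], Module.Projective R P →
    ∀ (π : P →ₗ[R] Z), Function.Surjective π →
      ∀ (f : (LinearMap.ker π : Submodule R P) →ₗ[R] Y),
        ∃ F : P →ₗ[R] Y, ∀ s : LinearMap.ker π, F s = f s

/-- `EV R Y d Z` encodes `Ext^{d+1}(Z, Y) = 0` via iterated syzygies. -/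
def EV (R : Type) [Ring R] (Y : Type) [AddCommGroup Y] [Module R Y] :
    ℕ → ∀ (Z : Type) [AddCommGroup Z] [Module R Z], Prop
  | 0, Z, _, _ => Ext1Z R Y Z
  | (d+1), Z, _, _ => ∀ (P : Type) [AddCommGroup P] [Module R P], Module.Projective R P →
      ∀ (π : P →ₗ[R] Z), Function.Surjective π →
        EV R Y d (LinearMap.ker π : Submodule R P)

/-- Injective modules have all `Ext`s vanishing. -/
lemma EV_of_injective {Y : Type} [AddCommGroup Y] [Module R Y]
    (hY : Module.Injective R Y) :
    ∀ (d : ℕ) (Z : Type) [AddCommGroup Z] [Module R Z], EV R Y d Z := by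
  intro d
  induction d with
  | zero =>
    intro Z _ _ P _ _ _ π _ f
    obtain ⟨F, hF⟩ := hY.out (LinearMap.ker π).subtype (Submodule.injective_subtype _) f
    exact ⟨F, hF⟩
  | succ d ih =>
    intro Z _ _ P _ _ _ π _
    exact ih _

lemma EV_succ_of_all {Y : Type} [AddCommGroup Y] [Module R Y] {d : ℕ}
    (h : ∀ (Z : Type) [AddCommGroup Z] [Module R Z], EV R Y d Z) :
    ∀ (Z : Type) [AddCommGroup Z] [Module R Z], EV R Y (d+1) Z := by
  intro Z _ _ P _ _ _ π _
  exact h _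

/-- Dimension shifting along `0 → Y' → J → Y → 0` with `J` injective:
`Ext^{d+2}(Z,Y') = 0 → Ext^{d+1}(Z,Y) = 0`. -/
lemma EV_shift_down {Y' J Y : Type} [AddCommGroup Y'] [Module R Y'] [AddCommGroup J]
    [Module R J] [AddCommGroup Y] [Module R Y]
    (a : Y' →ₗ[R] J) (b : J →ₗ[R] Y) (ha : Function.Injective a) (hb : Function.Surjective b)
    (hex : LinearMap.ker b = LinearMap.range a) (hJ : Module.Injective R J) :
    ∀ (d : ℕ) (Z : Type) [AddCommGroup Z] [Module R Z], EV R Y' (d+1) Z → EV R Y d Z := by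
  intro d
  induction d with
  | zero =>
    intro Z _ _ hEV P _ _ hP π hπ f
    set ρ : (↥(LinearMap.ker π) →₀ R) →ₗ[R] ↥(LinearMap.ker π) :=
      Finsupp.linearCombination R (id : ↥(LinearMap.ker π) → ↥(LinearMap.ker π)) with hρdef
    have hρ : Function.Surjective ρ := Finsupp.linearCombination_id_surjective R _
    obtain ⟨h₁, hh₁⟩ := Module.projective_lifting_property b (f ∘ₗ ρ) hb
    have hker : ∀ s' : LinearMap.ker ρ, h₁ s' ∈ LinearMap.range a := by
      intro s'
      rw [← hex, LinearMap.mem_ker]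
      have : b (h₁ s') = f (ρ s') := by rw [← LinearMap.comp_apply, hh₁]; rfl
      rw [this, s'.2, map_zero]
    set e := LinearEquiv.ofInjective a ha with hedef
    set u : (LinearMap.ker ρ : Submodule R _) →ₗ[R] Y' :=
      e.symm.toLinearMap ∘ₗ LinearMap.codRestrict (LinearMap.range a)
        (h₁ ∘ₗ (LinearMap.ker ρ).subtype) hker with hudef
    have hau : ∀ s' : LinearMap.ker ρ, a (u s') = h₁ s' := by
      intro s'
      have : a (e.symm ⟨h₁ s', hker s'⟩) = (⟨h₁ s', hker s'⟩ : LinearMap.range a) := by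
        have := e.apply_symm_apply ⟨h₁ s', hker s'⟩
        exact congrArg Subtype.val this
      exact this
    have hP' : Module.Projective R (↥(LinearMap.ker π) →₀ R) := Module.Projective.of_free
    obtain ⟨U, hU⟩ := (hEV P hP π hπ) _ hP' ρ hρ u
    set θ : (↥(LinearMap.ker π) →₀ R) →ₗ[R] J := h₁ - a ∘ₗ U with hθ
    have hkerθ : LinearMap.ker ρ ≤ LinearMap.ker θ := by
      intro x hx
      have h1 : U x = u ⟨x, hx⟩ := hU ⟨x, hx⟩
      have h2 : a (u ⟨x, hx⟩) = h₁ x := hau ⟨x, hx⟩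
      simp only [LinearMap.mem_ker, hθ, LinearMap.sub_apply, LinearMap.comp_apply, h1, h2,
        sub_self]
    obtain ⟨hbar, hhbar⟩ := lift_of_surjective ρ hρ θ hkerθ
    have hbf : ∀ s : LinearMap.ker π, b (hbar s) = f s := by
      intro s
      obtain ⟨x, rfl⟩ := hρ s
      rw [hhbar]
      have h1 : b (h₁ x) = f (ρ x) := by rw [← LinearMap.comp_apply, hh₁]; rfl
      have h2 : b (a (U x)) = 0 := by
        have : a (U x) ∈ LinearMap.ker b := hex ▸ LinearMap.mem_range_self a (U x)
        exact this
      simp only [hθ, LinearMap.sub_apply, LinearMap.comp_apply, map_sub, h1, h2, sub_zero]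
    obtain ⟨H, hH⟩ := hJ.out (LinearMap.ker π).subtype
      (Submodule.injective_subtype (LinearMap.ker π)) hbar
    exact ⟨b ∘ₗ H, fun s => by
      rw [LinearMap.comp_apply, show (s : P) = (LinearMap.ker π).subtype s from rfl, hH s,
        hbf s]⟩
  | succ d ih =>
    intro Z _ _ hEV P _ _ hP π hπ
    exact ih _ (hEV P hP π hπ)


/-- Dimension shifting along `0 → Y → E → Z₀ → 0` with `E` injective:
`Ext^{d+1}(Z,Z₀) = 0 → Ext^{d+2}(Z,Y) = 0`. -/
lemma EV_shift_up {Y E Z₀ : Type} [AddCommGroup Y] [Module R Y] [AddCommGroup E] [Module R E]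
    [AddCommGroup Z₀] [Module R Z₀]
    (i : Y →ₗ[R] E) (p : E →ₗ[R] Z₀) (hi : Function.Injective i) (hp : Function.Surjective p)
    (hex : LinearMap.ker p = LinearMap.range i) (hE : Module.Injective R E) :
    ∀ (d : ℕ) (Z : Type) [AddCommGroup Z] [Module R Z], EV R Z₀ d Z → EV R Y (d+1) Z := by
  intro d
  induction d with
  | zero =>
    intro Z _ _ h0 P _ _ hP π hπ P₂ _ _ hP₂ π₂ hπ₂ f
    obtain ⟨G, hG⟩ := hE.out (LinearMap.ker π₂).subtype
      (Submodule.injective_subtype (LinearMap.ker π₂)) (i ∘ₗ f)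
    have hkerpG : LinearMap.ker π₂ ≤ LinearMap.ker (p ∘ₗ G) := by
      intro x hx
      have h1 : G x = i (f ⟨x, hx⟩) := hG ⟨x, hx⟩
      have h2 : i (f ⟨x, hx⟩) ∈ LinearMap.ker p := hex ▸ LinearMap.mem_range_self i _
      simp only [LinearMap.mem_ker, LinearMap.comp_apply, h1]
      exact h2
    obtain ⟨v, hv⟩ := lift_of_surjective π₂ hπ₂ (p ∘ₗ G) hkerpG
    obtain ⟨V, hV⟩ := h0 P hP π hπ v
    obtain ⟨W, hW⟩ := Module.projective_lifting_property p V hp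
    set θ : P₂ →ₗ[R] E := G - W ∘ₗ (LinearMap.ker π).subtype ∘ₗ π₂ with hθ
    have hrange : ∀ x : P₂, θ x ∈ LinearMap.range i := by
      intro x
      rw [← hex, LinearMap.mem_ker]
      have h1 : p (W ((LinearMap.ker π).subtype (π₂ x))) = V ((π₂ x : P)) := by
        rw [← LinearMap.comp_apply (f := p), hW]; rfl
      have h2 : V ((π₂ x : P)) = v (π₂ x) := hV (π₂ x)
      have h3 : p (G x) = v (π₂ x) := by
        have := (hv x).symm; rw [LinearMap.comp_apply] at this; exact this
      simp only [hθ, LinearMap.sub_apply, LinearMap.comp_apply, map_sub, h3, h1, h2, sub_self]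
    set e := LinearEquiv.ofInjective i hi with hedef
    refine ⟨e.symm.toLinearMap ∘ₗ LinearMap.codRestrict (LinearMap.range i) θ hrange,
      fun s => ?_⟩
    have hθs : θ (s : P₂) = i (f s) := by
      have hπ₂s : π₂ (s : P₂) = 0 := s.2
      simp only [hθ, LinearMap.sub_apply, LinearMap.comp_apply, hπ₂s, map_zero, sub_zero]
      simpa using hG s
    apply hi
    simp only [LinearMap.comp_apply, LinearEquiv.coe_coe, hedef]
    rw [LinearEquiv.ofInjective_symm_apply, LinearMap.codRestrict_apply, hθs]
  | succ d ih =>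
    intro Z _ _ h P _ _ hP π hπ
    exact ih _ (h P hP π hπ)

/-- If `Ext¹(Z, Q) = 0` for every `Z`, then `Q` is injective. -/
lemma injective_of_ext1 {Q : Type} [AddCommGroup Q] [Module R Q]
    (h : ∀ (Z : Type) [AddCommGroup Z] [Module R Z], Ext1Z R Q Z) : Module.Injective R Q where
  out X Y _ _ _ _ f hf g := by
    set p : (Y →₀ R) →ₗ[R] Y := Finsupp.linearCombination R (id : Y → Y) with hpdef
    have hp : Function.Surjective p := Finsupp.linearCombination_id_surjective R Y
    set π : (Y →₀ R) →ₗ[R] (Y ⧸ LinearMap.range f) := (LinearMap.range f).mkQ ∘ₗ p with hπdef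
    have hπ : Function.Surjective π := (Submodule.mkQ_surjective _).comp hp
    have hmem : ∀ u : LinearMap.ker π, p u ∈ LinearMap.range f := by
      intro u
      have : (LinearMap.range f).mkQ (p u) = 0 := u.2
      rwa [Submodule.mkQ_apply, Submodule.Quotient.mk_eq_zero] at this
    set e := LinearEquiv.ofInjective f hf with hedef
    set ft : (LinearMap.ker π : Submodule R (Y →₀ R)) →ₗ[R] Q :=
      g ∘ₗ e.symm.toLinearMap ∘ₗ LinearMap.codRestrict (LinearMap.range f)
        (p ∘ₗ (LinearMap.ker π).subtype) hmem with hftdef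
    obtain ⟨F, hF⟩ := h _ _ Module.Projective.of_free π hπ ft
    have hkerF : LinearMap.ker p ≤ LinearMap.ker F := by
      intro x hx
      have hxπ : x ∈ LinearMap.ker π := by
        simp only [LinearMap.mem_ker, hπdef, LinearMap.comp_apply]
        rw [show p x = 0 from hx, map_zero]
      have : F x = ft ⟨x, hxπ⟩ := hF ⟨x, hxπ⟩
      rw [LinearMap.mem_ker, this]
      have hcod : (LinearMap.codRestrict (LinearMap.range f)
          (p ∘ₗ (LinearMap.ker π).subtype) hmem ⟨x, hxπ⟩) = 0 := by
        apply Subtype.ext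
        exact hx
      simp only [hftdef, LinearMap.comp_apply, hcod, map_zero]
    obtain ⟨h', hh'⟩ := lift_of_surjective p hp F hkerF
    refine ⟨h', fun x => ?_⟩
    obtain ⟨u, hu⟩ := hp (f x)
    have huπ : u ∈ LinearMap.ker π := by
      simp only [LinearMap.mem_ker, hπdef, LinearMap.comp_apply, hu]
      rw [Submodule.mkQ_apply, Submodule.Quotient.mk_eq_zero]
      exact LinearMap.mem_range_self f x
    have h5 : h' (f x) = F u := by rw [← hu, hh']
    rw [h5, show F u = ft ⟨u, huπ⟩ from hF ⟨u, huπ⟩]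
    have hcod : (LinearMap.codRestrict (LinearMap.range f)
        (p ∘ₗ (LinearMap.ker π).subtype) hmem ⟨u, huπ⟩) = e x := by
      apply Subtype.ext
      simp only [LinearMap.codRestrict_apply, LinearMap.comp_apply, Submodule.subtype_apply,
        hedef, LinearEquiv.ofInjective_apply]
      exact hu
    simp only [hftdef, LinearMap.comp_apply, hcod, LinearEquiv.coe_coe,
      LinearEquiv.symm_apply_apply]

end

section

variable {R : Type} [Ring R]

lemma char_surjective_of_injective {N N' : Type} [AddCommGroup N] [AddCommGroup N'] [Module R N]
    [Module R N'] (φ : N →ₗ[R] N') (hφ : Function.Injective φ) :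
    Function.Surjective (charMap φ) := by
  intro G
  obtain ⟨H, hH⟩ := ext_addHom φ.toAddMonoidHom hφ G
  exact ⟨H, by ext x; exact hH x⟩

lemma char_injective_of_surjective {N N' : Type} [AddCommGroup N] [AddCommGroup N'] [Module R N]
    [Module R N'] (φ : N →ₗ[R] N') (hφ : Function.Surjective φ) :
    Function.Injective (charMap φ) := by
  intro F G h
  ext y
  obtain ⟨x, rfl⟩ := hφ y
  exact DFunLike.congr_fun h x

lemma char_exact {N₁ N₂ N₃ : Type} [AddCommGroup N₁] [AddCommGroup N₂] [AddCommGroup N₃]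
    [Module R N₁] [Module R N₂] [Module R N₃] (a : N₁ →ₗ[R] N₂) (b : N₂ →ₗ[R] N₃)
    (hb : Function.Surjective b) (hex : LinearMap.ker b = LinearMap.range a) :
    LinearMap.ker (charMap a) = LinearMap.range (charMap b) := by
  ext F
  constructor
  · intro hF
    have hF' : ∀ w, F (a w) = 0 := by
      intro w
      have : charMap a F = 0 := hF
      exact DFunLike.congr_fun this w
    have hker : LinearMap.ker (b.toAddMonoidHom.toIntLinearMap) ≤
        LinearMap.ker (F.toIntLinearMap) := by
      intro x hx
      have hxb : b x = 0 := hx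
      have : x ∈ LinearMap.range a := hex ▸ hxb
      obtain ⟨w, rfl⟩ := this
      exact hF' w
    obtain ⟨G, hG⟩ := lift_of_surjective (R := ℤ) b.toAddMonoidHom.toIntLinearMap hb
      F.toIntLinearMap hker
    refine ⟨G.toAddMonoidHom, ?_⟩
    ext x
    exact hG x
  · rintro ⟨G, rfl⟩
    have : ∀ w, G (b (a w)) = 0 := by
      intro w
      have : a w ∈ LinearMap.ker b := hex ▸ LinearMap.mem_range_self a w
      rw [LinearMap.mem_ker.mp this, map_zero]
    exact DFunLike.ext _ _ this

/-- the "action at `y`" additive map `B →+ Y` for a `Bᵈᵐᵃ`-module `Y`. -/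
def act {Y : Type} [AddCommGroup Y] [Module Rᵈᵐᵃ Y] (y : Y) : R →+ Y where
  toFun b := DomMulAct.mk b • y
  map_zero' := by
    show DomMulAct.mk (0 : R) • y = 0
    rw [show (DomMulAct.mk (0 : R) : Rᵈᵐᵃ) = 0 from rfl, zero_smul]
  map_add' b b' := by
    show DomMulAct.mk (b + b') • y = DomMulAct.mk b • y + DomMulAct.mk b' • y
    rw [show (DomMulAct.mk (b + b') : Rᵈᵐᵃ) = DomMulAct.mk b + DomMulAct.mk b' from rfl,
      add_smul]

/-- Lambek for free modules: the character module of a free module is injective. -/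
lemma char_free_injective (ι : Type) : Module.Injective Rᵈᵐᵃ ((ι →₀ R) →+ T) where
  out X Y _ _ _ _ f hf φ := by
    choose ψ hψ0 using fun i : ι => ext_addHom f.toAddMonoidHom hf
      { toFun := fun x => φ x (Finsupp.single i 1)
        map_zero' := by show φ 0 (Finsupp.single i 1) = 0; rw [map_zero]; rfl
        map_add' := fun x y => by
          show φ (x + y) (Finsupp.single i 1) = φ x (Finsupp.single i 1) + φ y (Finsupp.single i 1)
          rw [map_add]; rfl }
    have hψ : ∀ (i : ι) (x : X), ψ i (f x) = φ x (Finsupp.single i 1) := fun i x => hψ0 i x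
    have key : ∀ (y : Y) (i : ι) (b : R),
        (Finsupp.liftAddHom (fun j : ι => (ψ j).comp (act y))) (Finsupp.single i b)
          = ψ i (DomMulAct.mk b • y) := by
      intro y i b
      rw [Finsupp.liftAddHom_apply_single]
      rfl
    refine ⟨{ toFun := fun y => Finsupp.liftAddHom (fun j : ι => (ψ j).comp (act y))
              map_add' := ?_, map_smul' := ?_ }, ?_⟩
    · intro y y'
      refine Finsupp.addHom_ext fun i b => ?_
      rw [AddMonoidHom.add_apply, key, key, key, smul_add, map_add]
    · intro c y
      refine Finsupp.addHom_ext fun i b => ?_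
      rw [RingHom.id_apply, key, DomMulAct.smul_addMonoidHom_apply, Finsupp.smul_single,
        smul_eq_mul, key]
      congr 1
      rw [show (DomMulAct.mk (DomMulAct.mk.symm c * b) : Rᵈᵐᵃ)
          = DomMulAct.mk b * DomMulAct.mk (DomMulAct.mk.symm c) from rfl,
        Equiv.apply_symm_apply, mul_smul]
    · intro x
      refine Finsupp.addHom_ext fun i b => ?_
      have : (Finsupp.liftAddHom fun j : ι => (ψ j).comp (act (f x))) (Finsupp.single i b)
          = φ x (Finsupp.single i b) := by
        rw [key, ← map_smul f (DomMulAct.mk b) x, hψ i (DomMulAct.mk b • x),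
          map_smul φ (DomMulAct.mk b) x, DomMulAct.mk_smul_addMonoidHom_apply,
          Finsupp.smul_single, smul_eq_mul, mul_one]
      exact this

/-- Lambek: the character module of a projective module is injective. -/
lemma char_projective_injective {P : Type} [AddCommGroup P] [Module R P]
    (hP : Module.Projective R P) : Module.Injective Rᵈᵐᵃ (P →+ T) := by
  obtain ⟨σ, hσ⟩ := Module.projective_def'.mp hP
  exact char_injective_of_retract σ (Finsupp.linearCombination R id)
    (fun v => DFunLike.congr_fun hσ v) (char_free_injective P)

/-- finite projective dimension bounds the vanishing degree of `Ext(−, char)`. -/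
lemma EV_char_of_projDimLE (B : Type) [Ring B] :
    ∀ (d : ℕ) (C : ModuleCat.{0} B), projDimLE B d C →
      ∀ (Z : Type) [AddCommGroup Z] [Module Bᵈᵐᵃ Z], EV Bᵈᵐᵃ (↥C →+ T) d Z := by
  intro d
  induction d with
  | zero =>
    intro C hC Z _ _
    exact EV_of_injective (char_projective_injective hC) 0 Z
  | succ d ih =>
    intro C hC Z _ _
    obtain ⟨F, q, hFproj, hq, hker⟩ := hC
    refine EV_shift_up (charMap q) (charMap (LinearMap.ker q).subtype)
      (char_injective_of_surjective q hq)
      (char_surjective_of_injective _ (Submodule.injective_subtype _))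
      (char_exact _ q hq (Submodule.range_subtype _).symm)
      (char_projective_injective hFproj) d Z ?_
    exact ih (ModuleCat.of B (LinearMap.ker q)) hker Z

end

section

open TensorProduct

variable {A : Type} [CommRing A] {B : Type} [Ring B] [Algebra A B]

/-- the ring morphism `Aᵈᵐᵃ →+* Bᵈᵐᵃ` induced by `algebraMap`. -/
def dmaMap : Aᵈᵐᵃ →+* Bᵈᵐᵃ where
  toFun a := DomMulAct.mk (algebraMap A B (DomMulAct.mk.symm a))
  map_one' := by
    show DomMulAct.mk (algebraMap A B (DomMulAct.mk.symm (1 : Aᵈᵐᵃ))) = 1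
    rw [show DomMulAct.mk.symm (1 : Aᵈᵐᵃ) = (1 : A) from rfl, map_one]; rfl
  map_mul' u v := by
    show DomMulAct.mk (algebraMap A B (DomMulAct.mk.symm (u * v)))
      = DomMulAct.mk (algebraMap A B (DomMulAct.mk.symm u))
        * DomMulAct.mk (algebraMap A B (DomMulAct.mk.symm v))
    rw [show DomMulAct.mk.symm (u * v) = DomMulAct.mk.symm v * DomMulAct.mk.symm u from rfl,
      map_mul]
    rfl
  map_zero' := by
    show DomMulAct.mk (algebraMap A B (DomMulAct.mk.symm (0 : Aᵈᵐᵃ))) = 0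
    rw [show DomMulAct.mk.symm (0 : Aᵈᵐᵃ) = (0 : A) from rfl, map_zero]; rfl
  map_add' u v := by
    show DomMulAct.mk (algebraMap A B (DomMulAct.mk.symm (u + v)))
      = DomMulAct.mk (algebraMap A B (DomMulAct.mk.symm u))
        + DomMulAct.mk (algebraMap A B (DomMulAct.mk.symm v))
    rw [show DomMulAct.mk.symm (u + v) = DomMulAct.mk.symm u + DomMulAct.mk.symm v from rfl,
      map_add]
    rfl

lemma dmaMap_mk (a : A) : dmaMap (A := A) (B := B) (DomMulAct.mk a)
    = DomMulAct.mk (algebraMap A B a) := by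
  simp only [dmaMap, RingHom.coe_mk, MonoidHom.coe_mk, OneHom.coe_mk, Equiv.symm_apply_apply]

section coChar

variable (C : Type) [AddCommGroup C] [Module A C] [Module B C] [IsScalarTower A B C]
variable {Y : Type} [AddCommGroup Y] [Module Bᵈᵐᵃ Y]

/-- auxiliary construction for coinduction: a balanced family of characters on `C` indexed by
`Y` induces characters of `B ⊗[A] C`. -/
def coChar (Ψ : Y →+ (C →+ T))
    (hbal : ∀ (y : Y) (a : A) (b : B) (c : C),
      Ψ (DomMulAct.mk (a • b) • y) c = Ψ (DomMulAct.mk b • y) (a • c)) (y : Y) :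
    (B ⊗[A] C) →+ T :=
  TensorProduct.liftAddHom
    { toFun := fun b => Ψ (DomMulAct.mk b • y)
      map_zero' := by
        show Ψ (DomMulAct.mk (0 : B) • y) = 0
        rw [show (DomMulAct.mk (0:B) : Bᵈᵐᵃ) = 0 from rfl, zero_smul, map_zero]
      map_add' := fun b b' => by
        show Ψ (DomMulAct.mk (b + b') • y) = Ψ (DomMulAct.mk b • y) + Ψ (DomMulAct.mk b' • y)
        rw [show (DomMulAct.mk (b + b') : Bᵈᵐᵃ) = DomMulAct.mk b + DomMulAct.mk b' from rfl,
          add_smul, map_add] }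
    (fun a b c => hbal y a b c)

variable (Ψ : Y →+ (C →+ T))
  (hbal : ∀ (y : Y) (a : A) (b : B) (c : C),
    Ψ (DomMulAct.mk (a • b) • y) c = Ψ (DomMulAct.mk b • y) (a • c))

lemma coChar_tmul (y : Y) (b : B) (c : C) :
    coChar C Ψ hbal y (b ⊗ₜ[A] c) = Ψ (DomMulAct.mk b • y) c := by
  rw [coChar, liftAddHom_tmul]
  rfl

lemma coChar_add (y y' : Y) : coChar C Ψ hbal (y + y')
    = coChar C Ψ hbal y + coChar C Ψ hbal y' := by
  refine DFunLike.ext _ _ fun t => ?_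
  rw [AddMonoidHom.add_apply]
  induction t with
  | zero => rw [map_zero, map_zero, map_zero, add_zero]
  | tmul b c =>
    rw [coChar_tmul, coChar_tmul, coChar_tmul, smul_add, map_add]
    rfl
  | add t t' ht ht' =>
    rw [map_add, map_add, map_add, ht, ht']
    abel

lemma coChar_smul (cc : Bᵈᵐᵃ) (y : Y) : coChar C Ψ hbal (cc • y)
    = cc • coChar C Ψ hbal y := by
  refine DFunLike.ext _ _ fun t => ?_
  rw [DomMulAct.smul_addMonoidHom_apply]
  induction t with
  | zero => rw [map_zero, smul_zero, map_zero]
  | tmul b c =>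
    have hsm : (DomMulAct.mk.symm cc • (b ⊗ₜ[A] c) : B ⊗[A] C)
        = (DomMulAct.mk.symm cc * b) ⊗ₜ[A] c := by
      rw [smul_tmul', smul_eq_mul]
    rw [coChar_tmul, hsm, coChar_tmul]
    congr 2
    rw [show (DomMulAct.mk (DomMulAct.mk.symm cc * b) : Bᵈᵐᵃ)
        = DomMulAct.mk b * DomMulAct.mk (DomMulAct.mk.symm cc) from rfl,
      Equiv.apply_symm_apply, mul_smul]
  | add t t' ht ht' =>
    rw [smul_add, map_add, map_add, ht, ht']

end coChar

/-- Coinduction: the character module of `B ⊗[A] C` is an injective `Bᵈᵐᵃ`-module whenever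
the character module of `C` is an injective `Aᵈᵐᵃ`-module. -/
lemma char_base_tensor_injective (C : Type) [AddCommGroup C] [Module A C] [Module B C]
    [IsScalarTower A B C] (hC : Module.Injective Aᵈᵐᵃ (C →+ T)) :
    Module.Injective Bᵈᵐᵃ ((B ⊗[A] C) →+ T) where
  out X Y _ _ _ _ f hf φ := by
    letI mX : Module Aᵈᵐᵃ X := Module.compHom X (dmaMap (A := A) (B := B))
    letI mY : Module Aᵈᵐᵃ Y := Module.compHom Y (dmaMap (A := A) (B := B))
    have hsmulX : ∀ (a : A) (x : X), (DomMulAct.mk a : Aᵈᵐᵃ) • x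
        = (DomMulAct.mk (algebraMap A B a) : Bᵈᵐᵃ) • x := fun a x => by
      show dmaMap (A := A) (B := B) (DomMulAct.mk a) • x = _
      rw [dmaMap_mk]
    have hsmulY : ∀ (a : A) (y : Y), (DomMulAct.mk a : Aᵈᵐᵃ) • y
        = (DomMulAct.mk (algebraMap A B a) : Bᵈᵐᵃ) • y := fun a y => by
      show dmaMap (A := A) (B := B) (DomMulAct.mk a) • y = _
      rw [dmaMap_mk]
    set j₁ : C →+ B ⊗[A] C :=
      { toFun := fun c => (1 : B) ⊗ₜ[A] c
        map_zero' := tmul_zero _ _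
        map_add' := fun c c' => tmul_add _ _ _ } with hj₁
    set ψ₀ : X →ₗ[Aᵈᵐᵃ] (C →+ T) :=
      { toFun := fun x => (φ x).comp j₁
        map_add' := fun x x' => by
          refine DFunLike.ext _ _ fun c => ?_
          show φ (x + x') ((1:B) ⊗ₜ[A] c) = φ x ((1:B) ⊗ₜ[A] c) + φ x' ((1:B) ⊗ₜ[A] c)
          rw [map_add]
          rfl
        map_smul' := fun u x => by
          rw [RingHom.id_apply]
          refine DFunLike.ext _ _ fun c => ?_
          have h1 : u • x = (DomMulAct.mk (algebraMap A B (DomMulAct.mk.symm u)) : Bᵈᵐᵃ) • x := by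
            show dmaMap (A := A) (B := B) u • x = _
            rw [show u = DomMulAct.mk (DomMulAct.mk.symm u) from (Equiv.apply_symm_apply _ _).symm,
              dmaMap_mk, Equiv.symm_apply_apply]
          show φ (u • x) ((1 : B) ⊗ₜ[A] c) = ((φ x).comp j₁) (DomMulAct.mk.symm u • c)
          rw [h1, map_smul φ, DomMulAct.mk_smul_addMonoidHom_apply]
          show φ x ((algebraMap A B (DomMulAct.mk.symm u)) • ((1 : B) ⊗ₜ[A] c))
            = φ x ((1 : B) ⊗ₜ[A] (DomMulAct.mk.symm u • c))
          congr 1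
          rw [smul_tmul', smul_eq_mul, mul_one, Algebra.algebraMap_eq_smul_one, smul_tmul]
          } with hψ₀
    obtain ⟨Ψ, hΨ0⟩ := hC.out (X := X) (Y := Y)
      { toFun := f, map_add' := map_add f
        map_smul' := fun u x => by
          rw [RingHom.id_apply]
          show f (dmaMap (A := A) (B := B) u • x) = dmaMap (A := A) (B := B) u • f x
          exact map_smul f (dmaMap (A := A) (B := B) u) x } hf ψ₀
    have hΨ : ∀ x : X, Ψ (f x) = ψ₀ x := fun x => hΨ0 x
    have hbal : ∀ (y : Y) (a : A) (b : B) (c : C),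
        Ψ (DomMulAct.mk (a • b) • y) c = Ψ (DomMulAct.mk b • y) (a • c) := by
      intro y a b c
      have h1 : (DomMulAct.mk (a • b) : Bᵈᵐᵃ)
          = DomMulAct.mk b * DomMulAct.mk (algebraMap A B a) := by
        rw [Algebra.smul_def]; rfl
      have h3 : (DomMulAct.mk b : Bᵈᵐᵃ) • ((DomMulAct.mk a : Aᵈᵐᵃ) • y)
          = (DomMulAct.mk a : Aᵈᵐᵃ) • ((DomMulAct.mk b : Bᵈᵐᵃ) • y) := by
        rw [hsmulY, hsmulY, smul_smul, smul_smul,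
          show (DomMulAct.mk b : Bᵈᵐᵃ) * DomMulAct.mk (algebraMap A B a)
            = DomMulAct.mk (algebraMap A B a * b) from rfl,
          show (DomMulAct.mk (algebraMap A B a) : Bᵈᵐᵃ) * DomMulAct.mk b
            = DomMulAct.mk (b * algebraMap A B a) from rfl,
          Algebra.commutes]
      rw [h1, mul_smul, ← hsmulY, h3, map_smul Ψ (DomMulAct.mk a) (DomMulAct.mk b • y)]
      rw [DomMulAct.mk_smul_addMonoidHom_apply]
    refine ⟨{ toFun := coChar C Ψ.toAddMonoidHom (fun y a b c => hbal y a b c)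
              map_add' := coChar_add C Ψ.toAddMonoidHom (fun y a b c => hbal y a b c)
              map_smul' := fun cc y => by
                rw [RingHom.id_apply]
                show coChar C Ψ.toAddMonoidHom (fun y a b c => hbal y a b c) (cc • y)
                  = cc • coChar C Ψ.toAddMonoidHom (fun y a b c => hbal y a b c) y
                exact coChar_smul C Ψ.toAddMonoidHom (fun y a b c => hbal y a b c) cc y }, ?_⟩
    intro x
    refine DFunLike.ext _ _ fun t => ?_
    show coChar C Ψ.toAddMonoidHom (fun y a b c => hbal y a b c) (f x) t = φ x t
    induction t with
    | zero => rw [map_zero, map_zero]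
    | tmul b c =>
      refine (coChar_tmul C Ψ.toAddMonoidHom (fun y a b c => hbal y a b c) (f x) b c).trans ?_
      show Ψ (DomMulAct.mk b • f x) c = φ x (b ⊗ₜ[A] c)
      rw [← map_smul f (DomMulAct.mk b) x, hΨ]
      show φ (DomMulAct.mk b • x) ((1 : B) ⊗ₜ[A] c) = φ x (b ⊗ₜ[A] c)
      rw [map_smul φ, DomMulAct.mk_smul_addMonoidHom_apply]
      congr 1
      rw [smul_tmul', smul_eq_mul, mul_one]
    | add t t' ht ht' =>
      rw [map_add, map_add, ht, ht']

end

section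

open TensorProduct

variable {A : Type} [CommRing A] {B : Type} [Ring B] [Algebra A B]

section brTensor

variable (C : Type) [AddCommGroup C] [Module A C]
variable {V W : Type} [AddCommGroup V] [Module A V] [Module B V] [SMulCommClass A B V]
  [IsScalarTower A B V] [AddCommGroup W] [Module A W] [Module B W] [SMulCommClass A B W]
  [IsScalarTower A B W]

/-- `B`-linear version of `rTensor`. -/
def brTensor (u : V →ₗ[B] W) : V ⊗[A] C →ₗ[B] W ⊗[A] C where
  toFun := (u.restrictScalars A).rTensor C
  map_add' := map_add _
  map_smul' := fun b t => by
    rw [RingHom.id_apply]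
    show (u.restrictScalars A).rTensor C (b • t) = b • (u.restrictScalars A).rTensor C t
    induction t with
    | zero => rw [smul_zero, map_zero, smul_zero]
    | tmul v c =>
      rw [smul_tmul', LinearMap.rTensor_tmul, LinearMap.rTensor_tmul,
        LinearMap.restrictScalars_apply, LinearMap.restrictScalars_apply, map_smul, smul_tmul']
    | add t t' ht ht' => rw [smul_add, map_add, map_add, ht, ht', smul_add]

lemma brTensor_tmul (u : V →ₗ[B] W) (v : V) (c : C) :
    brTensor C u (v ⊗ₜ[A] c) = u v ⊗ₜ[A] c := rfl

end brTensor

section piTensor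

variable (C : Type) [AddCommGroup C] [Module A C] [Module B C] [IsScalarTower A B C]
variable (ι : Type) [Fintype ι] [DecidableEq ι]

/-- the canonical `A`-bilinear map underlying `piTensorFwd`. -/
def piTensorBil : (ι → B) →ₗ[A] C →ₗ[A] (ι → B ⊗[A] C) where
  toFun v :=
    { toFun := fun c => fun i => v i ⊗ₜ[A] c
      map_add' := fun c c' => by ext i; exact tmul_add _ _ _
      map_smul' := fun a c => by
        ext i
        rw [RingHom.id_apply]
        show v i ⊗ₜ[A] (a • c) = a • (v i ⊗ₜ[A] c)
        rw [tmul_smul] }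
  map_add' v v' := by
    ext c i
    show (v + v') i ⊗ₜ[A] c = v i ⊗ₜ[A] c + v' i ⊗ₜ[A] c
    rw [Pi.add_apply, add_tmul]
  map_smul' a v := by
    ext c i
    rw [RingHom.id_apply]
    show (a • v) i ⊗ₜ[A] c = a • (v i ⊗ₜ[A] c)
    rw [Pi.smul_apply, smul_tmul']

/-- the canonical `B`-linear map `(ι → B) ⊗[A] C → (ι → B ⊗[A] C)`. -/
def piTensorFwd : ((ι → B) ⊗[A] C) →ₗ[B] (ι → B ⊗[A] C) where
  toFun := TensorProduct.lift (piTensorBil C ι)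
  map_add' := map_add _
  map_smul' := fun b t => by
    rw [RingHom.id_apply]
    show TensorProduct.lift (piTensorBil C ι) (b • t) = b • TensorProduct.lift (piTensorBil C ι) t
    induction t with
    | zero => rw [smul_zero, map_zero, smul_zero]
    | tmul v c =>
      rw [smul_tmul', lift.tmul, lift.tmul]
      ext i
      show (piTensorBil (A := A) C ι (b • v)) c i = b • ((piTensorBil C ι v) c i)
      show (b • v) i ⊗ₜ[A] c = b • (v i ⊗ₜ[A] c)
      rw [Pi.smul_apply, smul_tmul']
    | add t t' ht ht' => rw [smul_add, map_add, map_add, ht, ht', smul_add]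

lemma piTensorFwd_tmul (v : ι → B) (c : C) (i : ι) :
    piTensorFwd C ι (v ⊗ₜ[A] c) i = v i ⊗ₜ[A] c := rfl

/-- the backward `B`-linear map `(ι → B ⊗[A] C) → (ι → B) ⊗[A] C`. -/
def piTensorBwd : (ι → B ⊗[A] C) →ₗ[B] ((ι → B) ⊗[A] C) :=
  ∑ i : ι, (brTensor C (LinearMap.single B (fun _ : ι => B) i)) ∘ₗ
    (LinearMap.proj (R := B) (φ := fun _ : ι => B ⊗[A] C) i)

lemma piTensor_retract : ∀ t : (ι → B) ⊗[A] C, piTensorBwd C ι (piTensorFwd C ι t) = t := by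
  intro t
  induction t with
  | zero => rw [map_zero, map_zero]
  | tmul v c =>
    rw [piTensorBwd, LinearMap.sum_apply]
    have h1 : ∀ i : ι, ((brTensor C (LinearMap.single B (fun _ : ι => B) i)) ∘ₗ
        (LinearMap.proj (R := B) (φ := fun _ : ι => B ⊗[A] C) i)) (piTensorFwd C ι (v ⊗ₜ[A] c))
          = (Pi.single i (v i) : ι → B) ⊗ₜ[A] c := by
      intro i
      rw [LinearMap.comp_apply, LinearMap.proj_apply, piTensorFwd_tmul, brTensor_tmul]
      congr 1
    rw [Finset.sum_congr rfl fun i _ => h1 i, ← sum_tmul]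
    congr 1
    exact Finset.univ_sum_single v
  | add t t' ht ht' => rw [map_add, map_add, ht, ht']

/-- character module of `(ι → B) ⊗[A] C` is `Bᵈᵐᵃ`-injective. -/
lemma char_pi_tensor_injective (hC : Module.Injective Aᵈᵐᵃ (C →+ T)) :
    Module.Injective Bᵈᵐᵃ (((ι → B) ⊗[A] C) →+ T) := by
  refine char_injective_of_retract (piTensorFwd C ι) (piTensorBwd C ι) (piTensor_retract C ι) ?_
  exact char_pi_injective (B ⊗[A] C) (char_base_tensor_injective C hC)

end piTensor

section basisTensor

variable (C : Type) [AddCommGroup C] [Module A C]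
variable (V : Type) [AddCommGroup V] [Module A V]

/-- bilinear map underlying the coordinate expansion of `V ⊗[A] C`. -/
def coordBil [Module.Free A V] :
    V →ₗ[A] C →ₗ[A] (Module.Free.ChooseBasisIndex A V → C) where
  toFun v :=
    { toFun := fun c => fun i => (Module.Free.chooseBasis A V).repr v i • c
      map_add' := fun c c' => by ext i; exact smul_add _ _ _
      map_smul' := fun a c => by
        ext i
        rw [RingHom.id_apply]
        show (Module.Free.chooseBasis A V).repr v i • (a • c)
          = a • ((Module.Free.chooseBasis A V).repr v i • c)
        exact smul_comm _ _ _ }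
  map_add' v v' := by
    ext c i
    show (Module.Free.chooseBasis A V).repr (v + v') i • c = _
    rw [map_add, Finsupp.add_apply, add_smul]
    rfl
  map_smul' a v := by
    ext c i
    rw [RingHom.id_apply]
    show (Module.Free.chooseBasis A V).repr (a • v) i • c
      = a • ((Module.Free.chooseBasis A V).repr v i • c)
    rw [map_smul, Finsupp.smul_apply, smul_eq_mul, mul_smul]

/-- For `V` finite free over `A`, the character module of `V ⊗[A] C` is `Aᵈᵐᵃ`-injective
whenever that of `C` is. -/
lemma charA_tensor_injective [Module.Free A V] [Module.Finite A V]
    (hC : Module.Injective Aᵈᵐᵃ (C →+ T)) :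
    Module.Injective Aᵈᵐᵃ ((V ⊗[A] C) →+ T) := by
  classical
  set bb := Module.Free.chooseBasis A V with hbb
  refine char_injective_of_retract (TensorProduct.lift (coordBil C V))
    (∑ i : Module.Free.ChooseBasisIndex A V, (TensorProduct.mk A V C (bb i)) ∘ₗ
      (LinearMap.proj (R := A) (φ := fun _ : Module.Free.ChooseBasisIndex A V => C) i))
    (fun t => ?_) (char_pi_injective C hC)
  induction t with
  | zero => rw [map_zero, map_zero]
  | tmul v c =>
    rw [lift.tmul, LinearMap.sum_apply]
    have h1 : ∀ i, ((TensorProduct.mk A V C (bb i)) ∘ₗ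
        (LinearMap.proj (R := A) (φ := fun _ : Module.Free.ChooseBasisIndex A V => C) i))
          ((coordBil C V v) c) = (bb.repr v i • bb i) ⊗ₜ[A] c := by
      intro i
      rw [LinearMap.comp_apply, LinearMap.proj_apply]
      show (bb i) ⊗ₜ[A] ((coordBil C V v) c i) = _
      show (bb i) ⊗ₜ[A] (bb.repr v i • c) = _
      rw [tmul_smul, smul_tmul']
    rw [Finset.sum_congr rfl fun i _ => h1 i, ← sum_tmul]
    congr 1
    exact bb.sum_repr v
  | add t t' ht ht' => rw [map_add, map_add, ht, ht']

end basisTensor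

end

section

open TensorProduct

variable {A : Type} [CommRing A] {B : Type} [Ring B] [Algebra A B]

section step

variable [Module.Free A B] [Module.Finite A B]
variable [Module B (B →ₗ[A] A)] [SMulCommClass A B (B →ₗ[A] A)]
variable (C : Type) [AddCommGroup C] [Module A C] [Module B C] [IsScalarTower A B C]

/-- the dual-basis embedding `C → Hom_A(B,A) ⊗[A] C`, as a bare function. -/
def iotaFun (c : C) : (B →ₗ[A] A) ⊗[A] C :=
  ∑ i, ((Module.Free.chooseBasis A B).coord i) ⊗ₜ[A] (((Module.Free.chooseBasis A B) i) • c)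

/-- the dual-basis embedding is `B`-linear (this uses the dual action `(b • h) x = h (x b)`). -/
def iota (hdual : ∀ (b : B) (h : B →ₗ[A] A) (x : B), (b • h) x = h (x * b)) :
    C →ₗ[B] (B →ₗ[A] A) ⊗[A] C where
  toFun := iotaFun C
  map_add' c c' := by
    rw [iotaFun, iotaFun, iotaFun, ← Finset.sum_add_distrib]
    refine Finset.sum_congr rfl fun i _ => ?_
    rw [smul_add, tmul_add]
  map_smul' b c := by
    classical
    rw [RingHom.id_apply]
    show iotaFun C (b • c) = b • iotaFun C c
    set bb := Module.Free.chooseBasis A B with hbb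
    have hb : ∀ i, (b • bb.coord i : B →ₗ[A] A)
        = ∑ j, ((bb.coord i) (bb j * b)) • bb.coord j := by
      intro i
      refine bb.ext fun l => ?_
      rw [hdual b (bb.coord i) (bb l), LinearMap.sum_apply]
      rw [Finset.sum_eq_single l (fun j _ hj => ?_) (fun h => absurd (Finset.mem_univ l) h)]
      · simp [LinearMap.smul_apply, Module.Basis.coord_apply, Module.Basis.repr_self, Finsupp.single_eq_same]
      · simp [LinearMap.smul_apply, Module.Basis.coord_apply, Module.Basis.repr_self,
          Finsupp.single_eq_of_ne hj]
    symm
    calc b • iotaFun C c = ∑ i, b • ((bb.coord i) ⊗ₜ[A] (bb i • c)) := by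
          rw [iotaFun, Finset.smul_sum]
      _ = ∑ i, ∑ j, (bb.coord j) ⊗ₜ[A] (((bb.coord i) (bb j * b)) • (bb i • c)) := by
          refine Finset.sum_congr rfl fun i _ => ?_
          rw [smul_tmul', hb i, sum_tmul]
          exact Finset.sum_congr rfl fun j _ => smul_tmul _ _ _
      _ = ∑ j, (bb.coord j) ⊗ₜ[A] (∑ i, ((bb.coord i) (bb j * b)) • (bb i • c)) := by
          rw [Finset.sum_comm]
          exact Finset.sum_congr rfl fun j _ => (tmul_sum _ _ _).symm
      _ = ∑ j, (bb.coord j) ⊗ₜ[A] ((bb j * b) • c) := by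
          refine Finset.sum_congr rfl fun j _ => ?_
          congr 1
          rw [Finset.sum_congr rfl
            (fun i _ => (smul_assoc ((bb.coord i) (bb j * b)) (bb i) c).symm), ← Finset.sum_smul]
          congr 1
          have h2 := bb.sum_repr (bb j * b)
          simp only [Module.Basis.coord_apply]
          exact h2
      _ = iotaFun C (b • c) := by
          rw [iotaFun]
          refine Finset.sum_congr rfl fun j _ => ?_
          rw [mul_smul]

/-- the `A`-linear retraction of `iota`, `h ⊗ c ↦ h(1) • c`. -/
def retr : ((B →ₗ[A] A) ⊗[A] C) →ₗ[A] C :=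
  TensorProduct.lift
    { toFun := fun h =>
        { toFun := fun c => h 1 • c
          map_add' := fun c c' => smul_add _ _ _
          map_smul' := fun a c => by rw [RingHom.id_apply]; exact smul_comm _ _ _ }
      map_add' := fun h h' => by
        ext c
        show (h + h') 1 • c = h 1 • c + h' 1 • c
        rw [LinearMap.add_apply, add_smul]
      map_smul' := fun a h => by
        ext c
        rw [RingHom.id_apply]
        show (a • h) 1 • c = a • (h 1 • c)
        rw [LinearMap.smul_apply, smul_eq_mul, mul_smul] }

lemma retr_iota (hdual : ∀ (b : B) (h : B →ₗ[A] A) (x : B), (b • h) x = h (x * b)) (c : C) :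
    retr C (iota C hdual c) = c := by
  show retr C (iotaFun C c) = c
  set bb := Module.Free.chooseBasis A B with hbb
  rw [iotaFun, map_sum]
  have h1 : ∀ i, retr C ((bb.coord i) ⊗ₜ[A] (bb i • c)) = ((bb.coord i) 1 • bb i) • c := by
    intro i
    rw [retr, lift.tmul]
    show (bb.coord i) 1 • (bb i • c) = _
    rw [smul_assoc]
  rw [Finset.sum_congr rfl fun i _ => h1 i, ← Finset.sum_smul]
  have h2 : (∑ i, (bb.coord i) 1 • bb i) = (1 : B) := by
    have := bb.sum_repr (1 : B)
    simp only [Module.Basis.coord_apply]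
    exact this
  rw [h2, one_smul]

end step

/-- the additive group structure on `Hom_A(B, A)`, made available to instance search. -/
instance dualAddCommGroup : AddCommGroup (B →ₗ[A] A) := LinearMap.addCommGroup

section descend

variable [Module.Free A B] [Module.Finite A B] [Module B (B →ₗ[A] A)]

lemma descend
    (hdual : ∀ (b : B) (h : B →ₗ[A] A) (x : B), (b • h) x = h (x * b))
    (hdualproj : Module.Projective B (B →ₗ[A] A))
    (g : ℕ) (hgl : ∀ M : ModuleCat.{0} B, projDimLE B g M) :
    ∀ (i : ℕ) (C : Type) [AddCommGroup C] [Module A C] [Module B C] [IsScalarTower A B C],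
      Module.Injective Aᵈᵐᵃ (C →+ T) →
      ∀ (Z : Type) [AddCommGroup Z] [Module Bᵈᵐᵃ Z], EV Bᵈᵐᵃ (C →+ T) (g - i) Z := by
  haveI hsc : SMulCommClass A B (B →ₗ[A] A) := ⟨fun a b h => by
    refine LinearMap.ext fun x => ?_
    rw [hdual, LinearMap.smul_apply, LinearMap.smul_apply, hdual]⟩
  haveI hst : IsScalarTower A B (B →ₗ[A] A) := ⟨fun a b h => by
    refine LinearMap.ext fun x => ?_
    rw [hdual, LinearMap.smul_apply, hdual]
    have hx : x * (a • b) = a • (x * b) := by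
      rw [Algebra.smul_def, Algebra.smul_def, ← mul_assoc, ← Algebra.commutes a x, mul_assoc]
    rw [hx, map_smul]⟩
  intro i
  induction i with
  | zero =>
    intro C _ _ _ _ hC Z _ _
    rw [Nat.sub_zero]
    exact EV_char_of_projDimLE B g (ModuleCat.of B C) (hgl _) Z
  | succ i ih =>
    intro C _ _ _ _ hC Z _ _
    rcases Nat.lt_or_ge i g with hig | hig
    · haveI : Module.Projective B (B →ₗ[A] A) := hdualproj
      haveI : Module.Finite B (B →ₗ[A] A) := Module.Finite.of_restrictScalars_finite A B _
      obtain ⟨s, q, hq⟩ := Module.Finite.exists_fin' B (B →ₗ[A] A)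
      obtain ⟨σ, hσ⟩ := Module.projective_lifting_property q LinearMap.id hq
      have hcharF : Module.Injective Bᵈᵐᵃ (((B →ₗ[A] A) ⊗[A] C) →+ T) := by
        classical
        refine char_injective_of_retract (brTensor C σ) (brTensor C q) (fun t => ?_)
          (char_pi_tensor_injective C (Fin s) hC)
        induction t with
        | zero => rw [map_zero, map_zero]
        | tmul d c =>
          rw [brTensor_tmul, brTensor_tmul]
          congr 1
          exact DFunLike.congr_fun hσ d
        | add t t' ht ht' => rw [map_add, map_add, ht, ht']
      set ιC := iota C hdual with hιC
      have hιinj : Function.Injective ιC := Function.LeftInverse.injective (retr_iota C hdual)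
      set N := LinearMap.range ιC with hN
      have hC' : Module.Injective Aᵈᵐᵃ ((((B →ₗ[A] A) ⊗[A] C) ⧸ N) →+ T) := by
        have hker : LinearMap.ker (N.mkQ.restrictScalars A) ≤ LinearMap.ker
            (LinearMap.id (R := A) - (ιC.restrictScalars A) ∘ₗ retr C) := by
          intro x hx
          have hxN : x ∈ N := by
            have h0 : N.mkQ x = 0 := hx
            rwa [← LinearMap.mem_ker, Submodule.ker_mkQ] at h0
          obtain ⟨c, rfl⟩ := hxN
          simp only [LinearMap.mem_ker, LinearMap.sub_apply, LinearMap.id_apply,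
            LinearMap.comp_apply, LinearMap.restrictScalars_apply]
          rw [retr_iota C hdual c, sub_self]
        obtain ⟨jmap, hjmap⟩ := lift_of_surjective (N.mkQ.restrictScalars A)
          (Submodule.mkQ_surjective N) _ hker
        refine char_injective_of_retract (R := A) jmap (N.mkQ.restrictScalars A) (fun v => ?_)
          (charA_tensor_injective C (B →ₗ[A] A) hC)
        obtain ⟨x, rfl⟩ := Submodule.mkQ_surjective N v
        have h1 : jmap (N.mkQ x) = x - ιC (retr C x) := hjmap x
        show N.mkQ (jmap (N.mkQ x)) = N.mkQ x
        rw [h1, map_sub]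
        have h0 : N.mkQ (ιC (retr C x)) = 0 := by
          rw [Submodule.mkQ_apply, Submodule.Quotient.mk_eq_zero]
          exact LinearMap.mem_range_self ιC (retr C x)
        rw [h0, sub_zero]
      have heq : g - i = (g - (i+1)) + 1 := by omega
      refine EV_shift_down (charMap N.mkQ) (charMap ιC)
        (char_injective_of_surjective N.mkQ (Submodule.mkQ_surjective N))
        (char_surjective_of_injective ιC hιinj)
        (char_exact ιC N.mkQ (Submodule.mkQ_surjective N) (by rw [Submodule.ker_mkQ]))
        hcharF (g - (i+1)) Z ?_
      rw [← heq]
      exact ih _ hC' Z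
    · have heq : g - (i+1) = g - i := by omega
      rw [heq]
      exact ih C hC Z

end descend

end

end Stmt17Aux

end

/-- Specialization of the homological descent proposition: let `k` be a field,
`A = k[x_1, …, x_n]` a polynomial algebra, and `B` a `k`-algebra containing `A`
(the algebra map `A → B` is injective) such that `B` is free of finite rank as an `A`-module.
If `M` is a `B`-module that is flat over `A`, `B` has finite global dimension, and
`Hom_A(B, A)` is projective over `B`, then `M` is flat over `B`. -/
theorem stmt17 (k : Type) [Field k] (n : ℕ) (B : Type) [Ring B]
    [Algebra (MvPolynomial (Fin n) k) B]
    (hinj : Function.Injective (algebraMap (MvPolynomial (Fin n) k) B))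
    (hfree : Module.Free (MvPolynomial (Fin n) k) B)
    (hfin : Module.Finite (MvPolynomial (Fin n) k) B)
    [Module B (B →ₗ[MvPolynomial (Fin n) k] (MvPolynomial (Fin n) k))]
    (hdual : ∀ (b : B) (h : B →ₗ[MvPolynomial (Fin n) k] (MvPolynomial (Fin n) k)) (x : B),
      (b • h) x = h (x * b))
    (hdualproj : Module.Projective B (B →ₗ[MvPolynomial (Fin n) k] (MvPolynomial (Fin n) k)))
    (hgl : HasFiniteGlobalDim B)
    (M : Type) [AddCommGroup M] [Module B M] [Module (MvPolynomial (Fin n) k) M]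
    [IsScalarTower (MvPolynomial (Fin n) k) B M]
    (hMA : IsFlat (MvPolynomial (Fin n) k) M) :
    IsFlat B M := by
  classical
  obtain ⟨g, hgl⟩ := hgl
  haveI := hfree
  haveI := hfin
  show Module.Injective Bᵈᵐᵃ (M →+ AddCircle (1 : ℚ))
  refine Stmt17Aux.injective_of_ext1 (fun Z _ _ => ?_)
  have h := Stmt17Aux.descend (A := MvPolynomial (Fin n) k) (B := B) hdual hdualproj g hgl
    g M hMA Z
  rwa [Nat.sub_self] at h
end
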